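/- arXiv:2510.05409 — 4 statements merged into one kernel-verified Lean document; each statement's English description precedes it below -/
import Mathlib

section
/- Let α ∈ ℝⁿ and δ ≥ 1. Suppose there exists C > 0 such that |⟨ξ,α⟩| ≥ C|ξ|^{-(δ-1)} for every nonzero ξ ∈ ℤⁿ. Then there exists c > 0 such that ‖∇f‖_{L²(𝕋ⁿ)}^{δ-1} · ‖⟨∇f,α⟩‖_{L²(𝕋ⁿ)} ≥ c‖f‖_{L²(𝕋ⁿ)}^δ for every f ∈ H¹(𝕋ⁿ) with mean value zero. -/
/-!
On the Fourier side, with `u ξ = |f̂ ξ|²`, the Diophantine condition says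
`1 ≤ (|ξ|²)^(δ-1) · (⟨ξ,α⟩ / C)²` on the support of `u` (which avoids `ξ = 0`). Hölder's
inequality with exponents `δ/(δ-1)` and `δ` then interpolates `∑ u` between `∑ |ξ|² u` and
`∑ ⟨ξ,α⟩² u`, giving `C² ‖f‖^(2δ) ≤ ‖∇f‖^(2(δ-1)) ‖⟨∇f,α⟩‖²`.
-/

/-- Euclidean norm of a frequency `ξ ∈ ℤⁿ`. -/
noncomputable def znorm {n : ℕ} (ξ : Fin n → ℤ) : ℝ :=
  Real.sqrt (∑ j, ((ξ j : ℝ)) ^ 2)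

/-- `L²(𝕋ⁿ)` norm of `f` in terms of its Fourier coefficients (Plancherel). -/
noncomputable def L2norm {n : ℕ} (a : (Fin n → ℤ) → ℂ) : ℝ :=
  Real.sqrt (∑' ξ, ‖a ξ‖ ^ 2)

/-- `L²(𝕋ⁿ)` norm of `∇f` in terms of the Fourier coefficients of `f`. -/
noncomputable def gradL2norm {n : ℕ} (a : (Fin n → ℤ) → ℂ) : ℝ :=
  Real.sqrt (∑' ξ, znorm ξ ^ 2 * ‖a ξ‖ ^ 2)

/-- `L²(𝕋ⁿ)` norm of the directional derivative `⟨∇f, α⟩` in terms of the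
Fourier coefficients of `f`. -/
noncomputable def dirL2norm {n : ℕ} (α : Fin n → ℝ) (a : (Fin n → ℤ) → ℂ) : ℝ :=
  Real.sqrt (∑' ξ, (∑ j, (ξ j : ℝ) * α j) ^ 2 * ‖a ξ‖ ^ 2)

/-- Membership in `H¹(𝕋ⁿ)`, via Fourier coefficients. -/
def memH1 {n : ℕ} (a : (Fin n → ℤ) → ℂ) : Prop :=
  Summable fun ξ => (1 + znorm ξ ^ 2) * ‖a ξ‖ ^ 2

section Interpolation

variable {ι : Type*} {u x y : ι → ℝ}

theorem tsum_le_tsum_mul_rpow_mul_tsum_mul_rpow {p q : ℝ} (hpq : p.HolderConjugate q)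
    (hu : ∀ i, 0 ≤ u i) (hx : ∀ i, 0 ≤ x i) (hy : ∀ i, 0 ≤ y i)
    (hxu : Summable fun i => x i * u i) (hyu : Summable fun i => y i * u i)
    (h : ∀ i, u i ≠ 0 → 1 ≤ x i ^ p⁻¹ * y i ^ q⁻¹) :
    ∑' i, u i ≤ (∑' i, x i * u i) ^ (1 / p) * (∑' i, y i * u i) ^ (1 / q) := by
  have hxu₀ i : 0 ≤ x i * u i := mul_nonneg (hx i) (hu i)
  have hyu₀ i : 0 ≤ y i * u i := mul_nonneg (hy i) (hu i)
  have hu_le i : u i ≤ (x i * u i) ^ p⁻¹ * (y i * u i) ^ q⁻¹ := by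
    rcases (hu i).eq_or_lt' with hui | hui
    · exact hui.le.trans (mul_nonneg (Real.rpow_nonneg (hxu₀ i) _) (Real.rpow_nonneg (hyu₀ i) _))
    · calc u i ≤ x i ^ p⁻¹ * y i ^ q⁻¹ * u i := le_mul_of_one_le_left hui.le (h i hui.ne')
        _ = x i ^ p⁻¹ * y i ^ q⁻¹ * u i ^ (p⁻¹ + q⁻¹) := by
          rw [hpq.inv_add_inv_eq_one, Real.rpow_one]
        _ = _ := by
          rw [Real.rpow_add hui, Real.mul_rpow (hx i) (hu i), Real.mul_rpow (hy i) (hu i)]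
          ring
  obtain ⟨hsum, hholder⟩ := Real.summable_and_inner_le_Lp_mul_Lq_tsum_of_nonneg hpq
    (f := fun i => (x i * u i) ^ p⁻¹) (g := fun i => (y i * u i) ^ q⁻¹)
    (fun i => Real.rpow_nonneg (hxu₀ i) _) (fun i => Real.rpow_nonneg (hyu₀ i) _)
    (by simpa only [Real.rpow_inv_rpow (hxu₀ _) hpq.ne_zero] using hxu)
    (by simpa only [Real.rpow_inv_rpow (hyu₀ _) hpq.symm.ne_zero] using hyu)
  simp only [Real.rpow_inv_rpow (hxu₀ _) hpq.ne_zero,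
    Real.rpow_inv_rpow (hyu₀ _) hpq.symm.ne_zero] at hholder
  exact ((Summable.of_nonneg_of_le hu hu_le hsum).tsum_le_tsum hu_le hsum).trans hholder

theorem tsum_rpow_le_tsum_mul_rpow_mul_tsum_mul {δ : ℝ} (hδ : 1 ≤ δ)
    (hu : ∀ i, 0 ≤ u i) (hx : ∀ i, 0 ≤ x i) (hy : ∀ i, 0 ≤ y i)
    (hxu : Summable fun i => x i * u i) (hyu : Summable fun i => y i * u i)
    (h : ∀ i, u i ≠ 0 → 1 ≤ x i ^ (δ - 1) * y i) :
    (∑' i, u i) ^ δ ≤ (∑' i, x i * u i) ^ (δ - 1) * ∑' i, y i * u i := by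
  rcases hδ.eq_or_lt with rfl | hδ
  · have hu_le i : u i ≤ y i * u i := by
      rcases (hu i).eq_or_lt' with hui | hui
      · simp [hui]
      · simpa using le_mul_of_one_le_left hui.le (h i hui.ne')
    simpa using (Summable.of_nonneg_of_le hu hu_le hyu).tsum_le_tsum hu_le hyu
  have hpq : (δ / (δ - 1)).HolderConjugate δ := (Real.HolderConjugate.conjExponent hδ).symm
  have hexp : (δ / (δ - 1))⁻¹ = (δ - 1) * δ⁻¹ := by rw [inv_div, div_eq_mul_inv]
  have key := tsum_le_tsum_mul_rpow_mul_tsum_mul_rpow hpq hu hx hy hxu hyu fun i hi => by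
    rw [hexp, Real.rpow_mul (hx i), ← Real.mul_rpow (Real.rpow_nonneg (hx i) _) (hy i)]
    exact Real.one_le_rpow (h i hi) (by positivity)
  have hX : 0 ≤ ∑' i, x i * u i := tsum_nonneg fun i => mul_nonneg (hx i) (hu i)
  have hY : 0 ≤ ∑' i, y i * u i := tsum_nonneg fun i => mul_nonneg (hy i) (hu i)
  calc (∑' i, u i) ^ δ
      ≤ ((∑' i, x i * u i) ^ (1 / (δ / (δ - 1))) * (∑' i, y i * u i) ^ (1 / δ)) ^ δ :=
        Real.rpow_le_rpow (tsum_nonneg hu) key (by positivity)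
    _ = (∑' i, x i * u i) ^ (δ - 1) * ∑' i, y i * u i := by
        rw [Real.mul_rpow (by positivity) (by positivity), ← Real.rpow_mul hX, ← Real.rpow_mul hY]
        field_simp
        rw [Real.rpow_one]

end Interpolation

theorem Real.rpow_sqrt_eq_sqrt_rpow {s : ℝ} (hs : 0 ≤ s) (r : ℝ) : √s ^ r = √(s ^ r) := by
  rw [Real.sqrt_eq_rpow, Real.sqrt_eq_rpow, ← Real.rpow_mul hs, ← Real.rpow_mul hs, mul_comm]

theorem one_le_sq_rpow_mul_div_sq {r s C e : ℝ} (hr : 0 < r) (hC : 0 < C)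
    (h : C * r ^ (-e) ≤ |s|) : 1 ≤ (r ^ 2) ^ e * (s / C) ^ 2 := by
  have hC_le : C ≤ r ^ e * |s| := by
    rwa [Real.rpow_neg hr.le, ← div_eq_mul_inv, div_le_iff₀ (by positivity), mul_comm] at h
  have hone : 1 ≤ r ^ e * |s| / C := (one_le_div hC).2 hC_le
  calc 1 ≤ (r ^ e * |s| / C) ^ 2 := one_le_pow₀ hone
    _ = (r ^ 2) ^ e * (s / C) ^ 2 := by
      rw [mul_div_assoc, mul_pow, Real.rpow_pow_comm hr.le, div_pow, div_pow, sq_abs]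

theorem znorm_pos {n : ℕ} {ξ : Fin n → ℤ} (hξ : ξ ≠ 0) : 0 < znorm ξ := by
  obtain ⟨j, hj⟩ := Function.ne_iff.1 hξ
  have hj' : (ξ j : ℝ) ≠ 0 := Int.cast_ne_zero.2 hj
  exact Real.sqrt_pos.2 <|
    Finset.sum_pos' (fun i _ => sq_nonneg _) ⟨j, Finset.mem_univ j, by positivity⟩

theorem sq_sum_mul_le_znorm_sq_mul {n : ℕ} (ξ : Fin n → ℤ) (α : Fin n → ℝ) :
    (∑ j, (ξ j : ℝ) * α j) ^ 2 ≤ znorm ξ ^ 2 * ∑ j, α j ^ 2 := by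
  rw [znorm, Real.sq_sqrt (by positivity)]
  exact Finset.sum_mul_sq_le_sq_mul_sq _ _ _

namespace memH1

variable {n : ℕ} {a : (Fin n → ℤ) → ℂ}

theorem summable_znorm_sq_mul (ha : memH1 a) : Summable fun ξ => znorm ξ ^ 2 * ‖a ξ‖ ^ 2 :=
  ha.of_nonneg_of_le (fun ξ => by positivity) fun ξ => by nlinarith [sq_nonneg ‖a ξ‖]

theorem summable_sq_sum_mul (ha : memH1 a) (α : Fin n → ℝ) :
    Summable fun ξ => (∑ j, (ξ j : ℝ) * α j) ^ 2 * ‖a ξ‖ ^ 2 := by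
  refine (ha.summable_znorm_sq_mul.mul_left (∑ j, α j ^ 2)).of_nonneg_of_le
    (fun ξ => by positivity) fun ξ => ?_
  calc (∑ j, (ξ j : ℝ) * α j) ^ 2 * ‖a ξ‖ ^ 2
      ≤ znorm ξ ^ 2 * (∑ j, α j ^ 2) * ‖a ξ‖ ^ 2 := by
        gcongr; exact sq_sum_mul_le_znorm_sq_mul ξ α
    _ = (∑ j, α j ^ 2) * (znorm ξ ^ 2 * ‖a ξ‖ ^ 2) := by ring

end memH1

theorem stmt4 {n : ℕ} (α : Fin n → ℝ) (δ : ℝ) (hδ : 1 ≤ δ)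
    (h : ∃ C > 0, ∀ ξ : Fin n → ℤ, ξ ≠ 0 →
      |∑ j, (ξ j : ℝ) * α j| ≥ C * znorm ξ ^ (-(δ - 1))) :
    ∃ c > 0, ∀ a : (Fin n → ℤ) → ℂ, memH1 a → a 0 = 0 →
      gradL2norm a ^ (δ - 1) * dirL2norm α a ≥ c * L2norm a ^ δ := by
  obtain ⟨C, hC, hdioph⟩ := h
  refine ⟨C, hC, fun a ha ha0 => ?_⟩
  have hweight ξ (hξ : ‖a ξ‖ ^ 2 ≠ 0) :
      1 ≤ (znorm ξ ^ 2) ^ (δ - 1) * ((∑ j, (ξ j : ℝ) * α j) / C) ^ 2 := by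
    have hξ0 : ξ ≠ 0 := by rintro rfl; simp [ha0] at hξ
    exact one_le_sq_rpow_mul_div_sq (znorm_pos hξ0) hC (hdioph ξ hξ0)
  have hdir : Summable fun ξ => ((∑ j, (ξ j : ℝ) * α j) / C) ^ 2 * ‖a ξ‖ ^ 2 := by
    simpa only [div_pow, div_mul_eq_mul_div] using (ha.summable_sq_sum_mul α).div_const (C ^ 2)
  have hinterp := tsum_rpow_le_tsum_mul_rpow_mul_tsum_mul hδ (fun _ => by positivity)
    (fun _ => by positivity) (fun _ => by positivity) ha.summable_znorm_sq_mul hdir hweight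
  simp only [div_pow, div_mul_eq_mul_div, tsum_div_const, mul_div_assoc'] at hinterp
  have hS0 : 0 ≤ ∑' ξ, ‖a ξ‖ ^ 2 := tsum_nonneg fun ξ => by positivity
  have hSG : 0 ≤ ∑' ξ, znorm ξ ^ 2 * ‖a ξ‖ ^ 2 := tsum_nonneg fun ξ => by positivity
  calc C * L2norm a ^ δ = √(C ^ 2 * (∑' ξ, ‖a ξ‖ ^ 2) ^ δ) := by
        rw [L2norm, Real.rpow_sqrt_eq_sqrt_rpow hS0, Real.sqrt_mul (by positivity),
          Real.sqrt_sq hC.le]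
    _ ≤ √((∑' ξ, znorm ξ ^ 2 * ‖a ξ‖ ^ 2) ^ (δ - 1) *
          ∑' ξ, (∑ j, (ξ j : ℝ) * α j) ^ 2 * ‖a ξ‖ ^ 2) :=
        Real.sqrt_le_sqrt (by rwa [le_div_iff₀ (by positivity), mul_comm] at hinterp)
    _ = gradL2norm a ^ (δ - 1) * dirL2norm α a := by
        rw [gradL2norm, dirL2norm, Real.rpow_sqrt_eq_sqrt_rpow hSG,
          Real.sqrt_mul (by positivity)]
end

section
/- Let α = (α₁, α₂) ∈ ℝ² with α₁α₂ ≠ 0, and suppose α₂/α₁ is an irrational number with finite irrationality measure μ. Then for every δ > μ there exists c > 0 such that ‖∇f‖_{L²(𝕋²)}^{δ-1}·‖α₁∂_x f + α₂∂_y f‖_{L²(𝕋²)} ≥ c‖f‖_{L²(𝕋²)}^δ for all f ∈ H¹(𝕋²) with mean value zero. -/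
/-!
Write `β = α₂ / α₁`. Taking `q = Q`, `p = round (β Q)` gives `|β - p/q| ≤ 1/(2Q)`, so the
Diophantine hypothesis at an exponent `δ` forces `δ > 1`. It gives
`|ξ₁ + β ξ₂| ≥ |ξ₂|^{1-δ} ≥ |ξ|^{1-δ}` once `|ξ₂| ≥ Q`, while for the finitely many smaller
`ξ₂ ≠ 0` irrationality of `β` keeps `|ξ₁ + β ξ₂|` away from `0`. Hence `|α·ξ| ≥ C |ξ|^{1-δ}`
for all `ξ ≠ 0`, that is `C² ‖a ξ‖^{2δ} ≤ ((α·ξ)² ‖a ξ‖²) (|ξ|² ‖a ξ‖²)^{δ-1}`, and Hölder's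
inequality with exponents `δ` and `δ/(δ-1)` sums this to `C² ‖f‖^{2δ} ≤ ‖α·∇f‖² ‖∇f‖^{2(δ-1)}`.
-/

/-- Euclidean norm of a frequency `ξ ∈ ℤ²`. -/
noncomputable def znorm2 (ξ : ℤ × ℤ) : ℝ :=
  Real.sqrt ((ξ.1 : ℝ) ^ 2 + (ξ.2 : ℝ) ^ 2)

/-- `L²(𝕋²)` norm of `f` in terms of its Fourier coefficients (Plancherel). -/
noncomputable def L2norm2 (a : ℤ × ℤ → ℂ) : ℝ :=
  Real.sqrt (∑' ξ, ‖a ξ‖ ^ 2)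

/-- `L²(𝕋²)` norm of `∇f` in terms of the Fourier coefficients of `f`. -/
noncomputable def gradL2norm2 (a : ℤ × ℤ → ℂ) : ℝ :=
  Real.sqrt (∑' ξ, znorm2 ξ ^ 2 * ‖a ξ‖ ^ 2)

/-- `L²(𝕋²)` norm of `α₁ ∂ₓ f + α₂ ∂_y f` in terms of the Fourier
coefficients of `f`. -/
noncomputable def dirL2norm2 (α₁ α₂ : ℝ) (a : ℤ × ℤ → ℂ) : ℝ :=
  Real.sqrt (∑' ξ, (α₁ * (ξ.1 : ℝ) + α₂ * (ξ.2 : ℝ)) ^ 2 * ‖a ξ‖ ^ 2)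

/-- Membership in `H¹(𝕋²)`, via Fourier coefficients. -/
def memH12 (a : ℤ × ℤ → ℂ) : Prop :=
  Summable fun ξ => (1 + znorm2 ξ ^ 2) * ‖a ξ‖ ^ 2

open Filter Topology

/-- An irrationality measure of `β` is a `μ` with `DiophantineBound β ν` for every `ν > μ`. -/
def DiophantineBound (β ν : ℝ) : Prop :=
  ∃ Q : ℕ, 0 < Q ∧ ∀ p q : ℤ, q ≠ 0 → (Q : ℝ) ≤ |(q : ℝ)| →
    |β - (p : ℝ) / (q : ℝ)| ≥ |(q : ℝ)| ^ (-ν)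

theorem DiophantineBound.one_lt {β ν : ℝ} (h : DiophantineBound β ν) : 1 < ν := by
  obtain ⟨Q, hQ, hbound⟩ := h
  have hQ1 : (1 : ℝ) ≤ Q := by exact_mod_cast hQ
  have hQ0 : (0 : ℝ) < Q := by positivity
  have hlow := hbound (round (β * Q)) Q (by exact_mod_cast hQ.ne') (by simp)
  have hup : |β - (round (β * Q) : ℝ) / Q| ≤ 1 / 2 * (Q : ℝ)⁻¹ := by
    rw [show β - (round (β * Q) : ℝ) / Q = (β * Q - round (β * Q)) * (Q : ℝ)⁻¹ by field_simp,
      abs_mul, abs_inv, abs_of_pos hQ0]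
    gcongr
    exact abs_sub_round _
  by_contra! hν
  have : (Q : ℝ)⁻¹ ≤ (Q : ℝ) ^ (-ν) := by
    rw [← Real.rpow_neg_one]
    exact Real.rpow_le_rpow_of_exponent_le hQ1 (by linarith)
  push_cast at hlow
  rw [abs_of_pos hQ0] at hlow
  linarith [inv_pos.2 hQ0]

theorem Irrational.exists_pos_le_abs_add_mul {β : ℝ} (hβ : Irrational β) (Q : ℕ) :
    ∃ ε > 0, ∀ p q : ℤ, q ≠ 0 → |q| ≤ Q → ε ≤ |p + β * q| := by
  have hT : ∀ᶠ ε in 𝓝[>] (0 : ℝ), ∀ q ∈ Finset.Icc (-(Q : ℤ)) Q, q ≠ 0 →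
      ε ≤ |β * q - round (β * q)| := by
    refine (eventually_all_finset _).2 fun q _ => ?_
    by_cases hq : q = 0
    · simp [hq]
    · have hpos : 0 < |β * q - round (β * q)| :=
        abs_pos.2 (sub_ne_zero.2 ((hβ.mul_intCast hq).ne_int _))
      filter_upwards [Ioo_mem_nhdsGT hpos] with ε hε _ using hε.2.le
  obtain ⟨ε, hε, hε0⟩ := (hT.and self_mem_nhdsWithin).exists
  refine ⟨ε, hε0, fun p q hq hqQ => (hε q (Finset.mem_Icc.2 (abs_le.1 hqQ)) hq).trans ?_⟩
  simpa [abs_sub_comm, add_comm] using round_le (β * q) (-p)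

theorem sq_znorm2 (ξ : ℤ × ℤ) : znorm2 ξ ^ 2 = (ξ.1 : ℝ) ^ 2 + (ξ.2 : ℝ) ^ 2 :=
  Real.sq_sqrt (by positivity)

theorem abs_snd_le_znorm2 (ξ : ℤ × ℤ) : |(ξ.2 : ℝ)| ≤ znorm2 ξ :=
  Real.abs_le_sqrt (le_add_of_nonneg_left (sq_nonneg _))

theorem one_le_znorm2 {ξ : ℤ × ℤ} (hξ : ξ ≠ 0) : 1 ≤ znorm2 ξ := by
  obtain ⟨m, n⟩ := ξ
  have hmn : m ≠ 0 ∨ n ≠ 0 := by contrapose! hξ; simp [hξ]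
  have : (1 : ℤ) ≤ m ^ 2 + n ^ 2 := by
    rcases hmn with h | h
    · nlinarith [Int.one_le_abs h, sq_abs m, sq_nonneg n]
    · nlinarith [Int.one_le_abs h, sq_abs n, sq_nonneg m]
  exact Real.one_le_sqrt.2 (by exact_mod_cast this)

theorem DiophantineBound.exists_pos_mul_rpow_le {β ν : ℝ} (hβ : Irrational β)
    (h : DiophantineBound β ν) :
    ∃ c > 0, ∀ ξ : ℤ × ℤ, ξ ≠ 0 → c * znorm2 ξ ^ (1 - ν) ≤ |ξ.1 + β * ξ.2| := by
  have hν : 1 - ν ≤ 0 := by linarith [h.one_lt]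
  obtain ⟨Q, -, hQ⟩ := h
  obtain ⟨ε, hε, hεQ⟩ := hβ.exists_pos_le_abs_add_mul Q
  refine ⟨min ε 1, lt_min hε one_pos, fun ξ hξ => ?_⟩
  have hpow0 : 0 ≤ znorm2 ξ ^ (1 - ν) := Real.rpow_nonneg (Real.sqrt_nonneg _) _
  have hpow : znorm2 ξ ^ (1 - ν) ≤ 1 :=
    Real.rpow_le_one_of_one_le_of_nonpos (one_le_znorm2 hξ) hν
  rcases eq_or_ne ξ.2 0 with h2 | h2
  · have h1 : (1 : ℝ) ≤ |(ξ.1 : ℝ)| := by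
      exact_mod_cast Int.one_le_abs fun h1 => hξ (Prod.ext h1 h2)
    calc min ε 1 * znorm2 ξ ^ (1 - ν) ≤ 1 * 1 :=
          mul_le_mul (min_le_right _ _) hpow hpow0 zero_le_one
      _ ≤ |ξ.1 + β * ξ.2| := by simpa [h2] using h1
  rcases lt_or_ge |(ξ.2 : ℝ)| Q with hsmall | hlarge
  · calc min ε 1 * znorm2 ξ ^ (1 - ν) ≤ ε * 1 :=
          mul_le_mul (min_le_left _ _) hpow hpow0 hε.le
      _ ≤ |ξ.1 + β * ξ.2| := by
          rw [mul_one]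
          exact hεQ ξ.1 ξ.2 h2 (by exact_mod_cast hsmall.le)
  · have h2' : (0 : ℝ) < |(ξ.2 : ℝ)| := abs_pos.2 (Int.cast_ne_zero.2 h2)
    calc min ε 1 * znorm2 ξ ^ (1 - ν) ≤ |(ξ.2 : ℝ)| ^ (1 - ν) :=
          (mul_le_of_le_one_left hpow0 (min_le_right _ _)).trans
            (Real.rpow_le_rpow_of_nonpos h2' (abs_snd_le_znorm2 ξ) hν)
      _ = |(ξ.2 : ℝ)| * |(ξ.2 : ℝ)| ^ (-ν) := by
          rw [sub_eq_add_neg, Real.rpow_add h2', Real.rpow_one]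
      _ ≤ |(ξ.2 : ℝ)| * |β - ((-ξ.1 : ℤ) : ℝ) / ξ.2| := by
          gcongr
          exact hQ _ _ h2 hlarge
      _ = |ξ.1 + β * ξ.2| := by
          rw [← abs_mul]
          congr 1
          push_cast
          field_simp
          ring

theorem exists_pos_mul_rpow_le_abs_mul_add_mul {α₁ α₂ ν : ℝ} (hα₁ : α₁ ≠ 0)
    (hirr : Irrational (α₂ / α₁)) (h : DiophantineBound (α₂ / α₁) ν) :
    ∃ C > 0, ∀ ξ : ℤ × ℤ, ξ ≠ 0 → C * znorm2 ξ ^ (1 - ν) ≤ |α₁ * ξ.1 + α₂ * ξ.2| := by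
  obtain ⟨c, hc, hcξ⟩ := h.exists_pos_mul_rpow_le hirr
  refine ⟨|α₁| * c, by positivity, fun ξ hξ => ?_⟩
  rw [show α₁ * ξ.1 + α₂ * ξ.2 = α₁ * (ξ.1 + α₂ / α₁ * ξ.2) by field_simp, abs_mul, mul_assoc]
  exact mul_le_mul_of_nonneg_left (hcξ ξ hξ) (abs_nonneg _)

theorem mul_tsum_rpow_le_tsum_mul_tsum_rpow {ι : Type*} {δ K : ℝ} {x y z : ι → ℝ}
    (hδ : 1 < δ) (hK : 0 ≤ K) (hx : ∀ i, 0 ≤ x i) (hy : ∀ i, 0 ≤ y i) (hz : ∀ i, 0 ≤ z i)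
    (hy_sum : Summable y) (hz_sum : Summable z) (h : ∀ i, K * x i ^ δ ≤ y i * z i ^ (δ - 1)) :
    K * (∑' i, x i) ^ δ ≤ (∑' i, y i) * (∑' i, z i) ^ (δ - 1) := by
  have hδ0 : δ ≠ 0 := by positivity
  have hroot {a b r : ℝ} (ha : 0 ≤ a) (hb : 0 ≤ b) : (a * b ^ r) ^ δ⁻¹ = a ^ δ⁻¹ * b ^ (r / δ) := by
    rw [Real.mul_rpow ha (Real.rpow_nonneg hb _), ← Real.rpow_mul hb, div_eq_mul_inv]
  rcases hK.eq_or_lt with rfl | hK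
  · rw [zero_mul]
    exact mul_nonneg (tsum_nonneg hy) (Real.rpow_nonneg (tsum_nonneg hz) _)
  set q := δ.conjExponent
  have hpq : δ.HolderConjugate q := .conjExponent hδ
  have hq : (δ - 1) / δ = 1 / q := by rw [one_div, ← hpq.one_sub_inv]; field_simp
  set f := fun i => y i ^ δ⁻¹
  set g := fun i => z i ^ (1 / q)
  have hf : ∀ i, f i ^ δ = y i := fun i => Real.rpow_inv_rpow (hy i) hδ0
  have hg : ∀ i, g i ^ q = z i := fun i => by
    simpa [g, one_div] using Real.rpow_inv_rpow (hz i) hpq.symm.ne_zero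
  obtain ⟨hfg_sum, hHolder⟩ :=
    Real.summable_and_inner_le_Lp_mul_Lq_tsum_of_nonneg (f := f) (g := g) hpq
    (fun i => Real.rpow_nonneg (hy i) _) (fun i => Real.rpow_nonneg (hz i) _)
    (by simpa only [hf] using hy_sum) (by simpa only [hg] using hz_sum)
  simp only [hf, hg] at hHolder
  rw [← hq, one_div] at hHolder
  have hpointwise : ∀ i, K ^ δ⁻¹ * x i ≤ f i * g i := fun i => by
    have := Real.rpow_le_rpow (by positivity [hx i]) (h i) (inv_nonneg.2 (by positivity))
    rwa [hroot hK.le (hx i), hroot (hy i) (hz i), div_self hδ0, Real.rpow_one, hq] at this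
  have hx_sum : Summable x := by
    refine (hfg_sum.mul_left (K ^ δ⁻¹)⁻¹).of_nonneg_of_le hx fun i => ?_
    rw [inv_mul_eq_div, le_div_iff₀' (by positivity)]
    exact hpointwise i
  have hsum : K ^ δ⁻¹ * ∑' i, x i ≤ (∑' i, y i) ^ δ⁻¹ * (∑' i, z i) ^ ((δ - 1) / δ) := by
    rw [← tsum_mul_left]
    exact (Summable.tsum_le_tsum hpointwise (hx_sum.mul_left _) hfg_sum).trans hHolder
  have hxs : 0 ≤ ∑' i, x i := tsum_nonneg hx
  have hys : 0 ≤ ∑' i, y i := tsum_nonneg hy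
  have hzs : 0 ≤ ∑' i, z i := tsum_nonneg hz
  rwa [← Real.rpow_le_rpow_iff (z := δ⁻¹) (by positivity) (by positivity) (by positivity),
    hroot hK.le hxs, hroot hys hzs, div_self hδ0, Real.rpow_one]

theorem memH12.summable_znorm2_sq_mul {a : ℤ × ℤ → ℂ} (ha : memH12 a) :
    Summable fun ξ => znorm2 ξ ^ 2 * ‖a ξ‖ ^ 2 :=
  ha.of_nonneg_of_le (fun _ => by positivity) fun ξ =>
    mul_le_mul_of_nonneg_right (le_add_of_nonneg_left zero_le_one) (by positivity)

theorem memH12.summable_dir {a : ℤ × ℤ → ℂ} (ha : memH12 a) (α₁ α₂ : ℝ) :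
    Summable fun ξ : ℤ × ℤ => (α₁ * ξ.1 + α₂ * ξ.2) ^ 2 * ‖a ξ‖ ^ 2 := by
  refine (ha.summable_znorm2_sq_mul.mul_left (α₁ ^ 2 + α₂ ^ 2)).of_nonneg_of_le
    (fun _ => by positivity) fun ξ => ?_
  rw [← mul_assoc, sq_znorm2]
  gcongr
  nlinarith [sq_nonneg (α₁ * ξ.2 - α₂ * ξ.1)]

theorem Real.sqrt_rpow {x : ℝ} (hx : 0 ≤ x) (r : ℝ) : √(x ^ r) = √x ^ r := by
  rw [← Real.rpow_div_two_eq_sqrt r hx, Real.sqrt_eq_rpow, ← Real.rpow_mul hx]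
  ring_nf

theorem sq_le_sq_mul_sq_rpow_of_mul_rpow_le {C d N δ : ℝ} (hC : 0 ≤ C) (hN : 0 < N)
    (h : C * N ^ (1 - δ) ≤ |d|) : C ^ 2 ≤ d ^ 2 * (N ^ 2) ^ (δ - 1) := by
  have h' : C ≤ |d| * N ^ (δ - 1) := by
    have := mul_le_mul_of_nonneg_right h (Real.rpow_nonneg hN.le (δ - 1))
    rwa [mul_assoc, ← Real.rpow_add hN, sub_add_sub_cancel', sub_self, Real.rpow_zero,
      mul_one] at this
  calc C ^ 2 ≤ (|d| * N ^ (δ - 1)) ^ 2 := pow_le_pow_left₀ hC h' 2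
    _ = d ^ 2 * (N ^ 2) ^ (δ - 1) := by rw [mul_pow, sq_abs, Real.rpow_pow_comm hN.le]

theorem directional_poincare_of_forall_mul_rpow_le {α₁ α₂ δ C : ℝ} (hδ : 1 < δ) (hC : 0 < C)
    (hCξ : ∀ ξ : ℤ × ℤ, ξ ≠ 0 → C * znorm2 ξ ^ (1 - δ) ≤ |α₁ * ξ.1 + α₂ * ξ.2|)
    {a : ℤ × ℤ → ℂ} (ha : memH12 a) (ha0 : a 0 = 0) :
    C * L2norm2 a ^ δ ≤ gradL2norm2 a ^ (δ - 1) * dirL2norm2 α₁ α₂ a := by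
  have hpointwise : ∀ ξ : ℤ × ℤ, C ^ 2 * (‖a ξ‖ ^ 2) ^ δ ≤
      ((α₁ * ξ.1 + α₂ * ξ.2) ^ 2 * ‖a ξ‖ ^ 2) * (znorm2 ξ ^ 2 * ‖a ξ‖ ^ 2) ^ (δ - 1) := by
    intro ξ
    rcases eq_or_ne (a ξ) 0 with h | h
    · simp [h, Real.zero_rpow (by positivity : δ ≠ 0)]
    have hξ : ξ ≠ 0 := by rintro rfl; exact h ha0
    have hN : 0 < znorm2 ξ := one_pos.trans_le (one_le_znorm2 hξ)
    have hC2 := sq_le_sq_mul_sq_rpow_of_mul_rpow_le hC.le hN (hCξ ξ hξ)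
    have hw : 0 < ‖a ξ‖ ^ 2 := by positivity
    calc C ^ 2 * (‖a ξ‖ ^ 2) ^ δ
        ≤ (α₁ * ξ.1 + α₂ * ξ.2) ^ 2 * (znorm2 ξ ^ 2) ^ (δ - 1) * (‖a ξ‖ ^ 2) ^ δ := by gcongr
      _ = _ := by
        rw [Real.mul_rpow (by positivity) hw.le, Real.rpow_sub_one hw.ne']
        field_simp
  have key := mul_tsum_rpow_le_tsum_mul_tsum_rpow hδ (sq_nonneg C) (fun _ => by positivity)
    (fun _ => by positivity) (fun _ => by positivity) (ha.summable_dir α₁ α₂)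
    ha.summable_znorm2_sq_mul hpointwise
  have hsqrt := Real.sqrt_le_sqrt key
  rwa [Real.sqrt_mul (sq_nonneg C), Real.sqrt_sq hC.le,
    Real.sqrt_rpow (tsum_nonneg fun _ => by positivity),
    Real.sqrt_mul (tsum_nonneg fun _ => by positivity),
    Real.sqrt_rpow (tsum_nonneg fun _ => by positivity), mul_comm (√_)] at hsqrt

/-- If `α₂/α₁` is irrational with finite irrationality measure `μ`, then the
directional Poincaré inequality on `𝕋²` in direction `α` holds for every
exponent `δ > μ`. -/
theorem stmt9 (α₁ α₂ : ℝ) (hα : α₁ * α₂ ≠ 0) (hirr : Irrational (α₂ / α₁))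
    (μ : ℝ)
    (hμ : ∀ ν > μ, ∃ Q : ℕ, 0 < Q ∧ ∀ p q : ℤ, q ≠ 0 → (Q : ℝ) ≤ |(q : ℝ)| →
      |α₂ / α₁ - (p : ℝ) / (q : ℝ)| ≥ |(q : ℝ)| ^ (-ν)) :
    ∀ δ > μ, ∃ c > 0, ∀ a : ℤ × ℤ → ℂ, memH12 a → a 0 = 0 →
      gradL2norm2 a ^ (δ - 1) * dirL2norm2 α₁ α₂ a ≥ c * L2norm2 a ^ δ := by
  intro δ hδ
  have hbound : DiophantineBound (α₂ / α₁) δ := hμ δ hδ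
  obtain ⟨C, hC, hCξ⟩ :=
    exists_pos_mul_rpow_le_abs_mul_add_mul (left_ne_zero_of_mul hα) hirr hbound
  exact ⟨C, hC, fun a ha ha0 =>
    directional_poincare_of_forall_mul_rpow_le hbound.one_lt hC hCξ ha ha0⟩
end

section
/- Let β be a Liouville number and α = (1, β). Then for every δ ≥ 1 and every c > 0 there exists a mean-zero f ∈ H¹(𝕋²) violating ‖∇f‖_{L²}^{δ-1}‖∂_x f + β∂_y f‖_{L²} ≥ c‖f‖_{L²}^δ. In other words, no directional Poincaré inequality holds in direction (1, β). -/
section PiSingle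

variable {ι : Type*} [DecidableEq ι]

lemma tsum_mul_norm_sq_single (g : ι → ℝ) (i : ι) (z : ℂ) :
    ∑' j, g j * ‖(Pi.single i z : ι → ℂ) j‖ ^ 2 = g i * ‖z‖ ^ 2 := by
  rw [tsum_eq_single i fun j hj => by simp [Pi.single_eq_of_ne hj], Pi.single_eq_same]

lemma sqrt_tsum_mul_norm_sq_single {g : ι → ℝ} (hg : ∀ j, 0 ≤ g j) (i : ι) (z : ℂ) :
    Real.sqrt (∑' j, g j ^ 2 * ‖(Pi.single i z : ι → ℂ) j‖ ^ 2) = g i * ‖z‖ := by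
  rw [tsum_mul_norm_sq_single, ← mul_pow, Real.sqrt_sq (mul_nonneg (hg i) (norm_nonneg z))]

end PiSingle

section SingleFourierMode

variable (ξ : ℤ × ℤ) (z : ℂ)

lemma memH12_single : memH12 (Pi.single ξ z) :=
  summable_of_ne_finset_zero (s := {ξ}) fun η hη => by
    simp [Pi.single_eq_of_ne (Finset.notMem_singleton.mp hη)]

lemma L2norm2_single : L2norm2 (Pi.single ξ z) = ‖z‖ := by
  simpa [L2norm2] using sqrt_tsum_mul_norm_sq_single (g := fun _ => 1) (fun _ => zero_le_one) ξ z

lemma gradL2norm2_single : gradL2norm2 (Pi.single ξ z) = znorm2 ξ * ‖z‖ :=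
  sqrt_tsum_mul_norm_sq_single (fun _ => Real.sqrt_nonneg _) ξ z

lemma dirL2norm2_single (α₁ α₂ : ℝ) :
    dirL2norm2 α₁ α₂ (Pi.single ξ z) = |α₁ * ξ.1 + α₂ * ξ.2| * ‖z‖ := by
  rw [dirL2norm2, ← sqrt_tsum_mul_norm_sq_single
    (g := fun η : ℤ × ℤ => |α₁ * η.1 + α₂ * η.2|) (fun _ => abs_nonneg _) ξ z]
  simp only [sq_abs]

end SingleFourierMode

lemma znorm2_le_abs_add_abs (ξ : ℤ × ℤ) : znorm2 ξ ≤ |(ξ.1 : ℝ)| + |(ξ.2 : ℝ)| := by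
  rw [znorm2, Real.sqrt_le_left (by positivity)]
  nlinarith [sq_abs (ξ.1 : ℝ), sq_abs (ξ.2 : ℝ), abs_nonneg (ξ.1 : ℝ), abs_nonneg (ξ.2 : ℝ)]

lemma rpow_znorm2_mul_abs_sub_lt {β δ : ℝ} (hδ : 1 ≤ δ) {p : ℤ} {q : ℕ} (hq : 1 ≤ q)
    (hpq : |β - p / q| < (q : ℝ) ^ (-(δ + 1))) :
    znorm2 (p, -q) ^ (δ - 1) * |p - β * q| < (|β| + 2) ^ (δ - 1) / q := by
  have hq1 : (1 : ℝ) ≤ q := by exact_mod_cast hq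
  have hq0 : (0 : ℝ) < q := by positivity
  have hd : |p - β * q| < (q : ℝ) ^ (-δ) := by
    calc |p - β * q| = q * |β - p / q| := by
          rw [← abs_of_pos hq0, ← abs_mul, abs_of_pos hq0, abs_sub_comm]
          field_simp
      _ < q * (q : ℝ) ^ (-(δ + 1)) := by gcongr
      _ = (q : ℝ) ^ (-δ) := by
          rw [mul_comm, ← Real.rpow_add_one hq0.ne']
          ring_nf
  have hd1 : |p - β * q| ≤ 1 :=
    hd.le.trans (Real.rpow_le_one_of_one_le_of_nonpos hq1 (by linarith))
  have hξ : znorm2 (p, -q) ≤ (|β| + 2) * q := by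
    have hp : |(p : ℝ)| ≤ |p - β * q| + |β| * q := by
      simpa [abs_mul, abs_of_pos hq0] using abs_add_le (p - β * q : ℝ) (β * q)
    refine (znorm2_le_abs_add_abs _).trans ?_
    simp only [Int.cast_neg, Int.cast_natCast, abs_neg, abs_of_pos hq0]
    nlinarith
  calc znorm2 (p, -q) ^ (δ - 1) * |p - β * q|
      ≤ ((|β| + 2) * q) ^ (δ - 1) * |p - β * q| := by
        gcongr
        · exact Real.sqrt_nonneg _
    _ < ((|β| + 2) * q) ^ (δ - 1) * (q : ℝ) ^ (-δ) := by gcongr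
    _ = (|β| + 2) ^ (δ - 1) / q := by
        rw [Real.mul_rpow (by positivity) hq0.le, mul_assoc, ← Real.rpow_add hq0,
          show δ - 1 + -δ = -1 by ring, Real.rpow_neg_one, div_eq_mul_inv]

open Filter in
theorem Liouville.exists_rpow_znorm2_mul_abs_sub_lt {β : ℝ} (hβ : Liouville β) {δ : ℝ}
    (hδ : 1 ≤ δ) {c : ℝ} (hc : 0 < c) :
    ∃ (p : ℤ) (q : ℕ), 1 ≤ q ∧ znorm2 (p, -q) ^ (δ - 1) * |p - β * q| < c := by
  have hsmall : ∀ᶠ q : ℕ in atTop, (|β| + 2) ^ (δ - 1) / q < c :=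
    (tendsto_const_div_atTop_nhds_zero_nat _).eventually (gt_mem_nhds hc)
  obtain ⟨q, ⟨hq, hqc⟩, p, -, hpq⟩ := ((eventually_ge_atTop 1).and hsmall).and_frequently
    ((hβ.liouvilleWith (δ + 2)).frequently_lt_rpow_neg (by linarith : δ + 1 < δ + 2)) |>.exists
  exact ⟨p, q, hq, (rpow_znorm2_mul_abs_sub_lt hδ hq hpq).trans hqc⟩

/-- For a Liouville number `β`, no directional Poincaré inequality holds on `𝕋²`
in the direction `(1, β)`, for any exponent `δ ≥ 1`. -/
theorem stmt11 (β : ℝ) (hβ : Liouville β) :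
    ∀ δ : ℝ, 1 ≤ δ → ∀ c > (0 : ℝ), ∃ a : ℤ × ℤ → ℂ, memH12 a ∧ a 0 = 0 ∧
      gradL2norm2 a ^ (δ - 1) * dirL2norm2 1 β a < c * L2norm2 a ^ δ := by
  intro δ hδ c hc
  obtain ⟨p, q, hq, hpq⟩ := hβ.exists_rpow_znorm2_mul_abs_sub_lt hδ hc
  have hξ : ((p, -q) : ℤ × ℤ) ≠ 0 := by
    simp only [ne_eq, Prod.mk_eq_zero, neg_eq_zero, Int.natCast_eq_zero, not_and]
    omega
  refine ⟨Pi.single (p, -q) 1, memH12_single _ _, Pi.single_eq_of_ne hξ.symm _, ?_⟩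
  rw [gradL2norm2_single, dirL2norm2_single, L2norm2_single]
  convert hpq using 3 <;> simp [sub_eq_add_neg]
end

section
/- Fix ℓ ∈ ℕ₀ and θ ∈ ℝ, and let C₁(ℓ,θ) be the (2ℓ+2)×(2ℓ+2) tridiagonal matrix with diagonal entries sin(θ)·(2ℓ+1−2(j−1))/2 for j = 1,…,2ℓ+2, superdiagonal entries cos(θ)·k/2 and subdiagonal entries cos(θ)·(2ℓ+2−k)/2 for k = 1,…,2ℓ+1. Then the multiset of eigenvalues of C₁(ℓ,θ) is {±1/2, ±3/2, …, ±(2ℓ+1)/2}, independent of θ. -/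
/-!
Read a vector of `ℂ^(2ℓ+2)` as the coefficients of a polynomial of degree `≤ N = 2ℓ+1`. Then
`2 • C₁(ℓ,θ)` becomes the first-order operator `P ↦ N (a + bX) P + (b - 2aX - bX²) P'` with
`a = sin θ`, `b = cos θ`: the element `-aH + b(E + F)` of `𝔰𝔩₂` acting on binary forms of degree
`N`, dehomogenized. Write `a = c² - s²`, `b = 2cs` with `c² + s² = 1` (half-angle `π/4 - θ/2`).
The rotated linear forms `u = c + sX` and `w = -s + cX` are eigenvectors for `N = 1` with
eigenvalues `1` and `-1`, and the operator obeys a Leibniz rule in `N`, so `u^k w^j` with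
`k + j = N` is an eigenvector with eigenvalue `k - j`. These are `2ℓ+2` distinct eigenvalues
`(N - 2j)/2` of a matrix of size `2ℓ+2`, hence all of them, each simple.
-/

open Matrix

/-- The tridiagonal matrix `C₁(ℓ,θ)` (viewed over `ℂ`): diagonal entries
`sin θ · (2ℓ+1-2(j-1))/2`, superdiagonal `cos θ · k/2`, subdiagonal
`cos θ · (2ℓ+2-k)/2`. -/
noncomputable def C1 (ℓ : ℕ) (θ : ℝ) : Matrix (Fin (2 * ℓ + 2)) (Fin (2 * ℓ + 2)) ℂ :=
  Matrix.of fun i j =>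
    if i = j then (Real.sin θ * ((2 * (ℓ : ℝ) + 1 - 2 * (i : ℕ)) / 2) : ℝ)
    else if (j : ℕ) = (i : ℕ) + 1 then (Real.cos θ * (((i : ℕ) + 1) / 2) : ℝ)
    else if (i : ℕ) = (j : ℕ) + 1 then (Real.cos θ * ((2 * (ℓ : ℝ) + 1 - (j : ℕ)) / 2) : ℝ)
    else 0

open Polynomial

namespace Polynomial

lemma coeff_finVec_ne_zero {R : Type*} [Semiring R] {n : ℕ} {P : R[X]} (hP : P ≠ 0)
    (hdeg : P.natDegree < n) : (fun j : Fin n => P.coeff j) ≠ 0 := fun h0 =>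
  hP (leadingCoeff_eq_zero.1 (congrFun h0 ⟨P.natDegree, hdeg⟩))

variable {R : Type*} [CommRing R]

noncomputable def firstOrderOp (N : ℕ) (α β P : R[X]) : R[X] :=
  N * α * P + β * derivative P

lemma firstOrderOp_mul (m n : ℕ) (α β P Q : R[X]) :
    firstOrderOp (m + n) α β (P * Q) = firstOrderOp m α β P * Q + P * firstOrderOp n α β Q := by
  simp only [firstOrderOp, derivative_mul, Nat.cast_add]
  ring

lemma firstOrderOp_mul_of_eq_C_mul {m n : ℕ} {α β P Q : R[X]} {a b : R}
    (hP : firstOrderOp m α β P = C a * P) (hQ : firstOrderOp n α β Q = C b * Q) :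
    firstOrderOp (m + n) α β (P * Q) = C (a + b) * (P * Q) := by
  rw [firstOrderOp_mul, hP, hQ, C_add]
  ring

lemma firstOrderOp_pow_of_eq_C_mul {m : ℕ} {α β P : R[X]} {a : R}
    (hP : firstOrderOp m α β P = C a * P) (k : ℕ) :
    firstOrderOp (k * m) α β (P ^ k) = C (k * a) * P ^ k := by
  induction k with
  | zero => simp [firstOrderOp]
  | succ k ih =>
    rw [add_mul, one_mul, pow_succ, firstOrderOp_mul_of_eq_C_mul ih hP]
    push_cast
    ring_nf

noncomputable def spinOp (a b : R) (N : ℕ) : R[X] → R[X] :=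
  firstOrderOp N (C a + C b * X) (C b - C (2 * a) * X - C b * X ^ 2)

noncomputable def rotatedMonomial (c s : R) (k j : ℕ) : R[X] :=
  (C c + C s * X) ^ k * (C (-s) + C c * X) ^ j

section rotation

variable {c s : R} (h : c ^ 2 + s ^ 2 = 1)
include h

lemma spinOp_rotation_fst :
    spinOp (c ^ 2 - s ^ 2) (2 * c * s) 1 (C c + C s * X) = C 1 * (C c + C s * X) := by
  have hC : C c ^ 2 + C s ^ 2 = (1 : R[X]) := by simpa using congrArg C h
  simp only [spinOp, firstOrderOp, derivative_add, derivative_C_mul_X, derivative_C, map_sub,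
    map_mul, map_pow, map_ofNat, map_one, Nat.cast_one]
  linear_combination (C c + C s * X) * hC

lemma spinOp_rotation_snd :
    spinOp (c ^ 2 - s ^ 2) (2 * c * s) 1 (C (-s) + C c * X) = C (-1) * (C (-s) + C c * X) := by
  have hC : C c ^ 2 + C s ^ 2 = (1 : R[X]) := by simpa using congrArg C h
  simp only [spinOp, firstOrderOp, derivative_add, derivative_C_mul_X, derivative_C, map_sub,
    map_mul, map_pow, map_ofNat, map_one, map_neg, Nat.cast_one]
  linear_combination (C s - C c * X) * hC

lemma spinOp_rotatedMonomial (k j : ℕ) :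
    spinOp (c ^ 2 - s ^ 2) (2 * c * s) (k + j) (rotatedMonomial c s k j)
      = C ((k : R) - j) * rotatedMonomial c s k j := by
  have := firstOrderOp_mul_of_eq_C_mul (firstOrderOp_pow_of_eq_C_mul (spinOp_rotation_fst h) k)
    (firstOrderOp_pow_of_eq_C_mul (spinOp_rotation_snd h) j)
  simpa [spinOp, rotatedMonomial, sub_eq_add_neg] using this

end rotation

lemma natDegree_rotatedMonomial_le (c s : R) (k j : ℕ) :
    (rotatedMonomial c s k j).natDegree ≤ k + j := by
  unfold rotatedMonomial
  compute_degree

lemma rotatedMonomial_ne_zero [IsDomain R] {c s : R} (h : c ^ 2 + s ^ 2 = 1) (k j : ℕ) :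
    rotatedMonomial c s k j ≠ 0 := by
  have hcs : ¬(c = 0 ∧ s = 0) := by
    rintro ⟨rfl, rfl⟩
    simp at h
  refine mul_ne_zero (pow_ne_zero _ fun hu => hcs ?_) (pow_ne_zero _ fun hw => hcs ?_)
  · exact ⟨by simpa using congrArg (coeff · 0) hu, by simpa using congrArg (coeff · 1) hu⟩
  · exact ⟨by simpa using congrArg (coeff · 1) hw, by simpa using congrArg (coeff · 0) hw⟩

lemma coeff_X_mul_derivative (P : R[X]) (m : ℕ) :
    (X * derivative P).coeff m = m * P.coeff m := by
  rcases m with _ | m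
  · simp
  · rw [coeff_X_mul, coeff_derivative]
    push_cast
    ring

lemma spinOp_coeff_zero (a b : R) (N : ℕ) (P : R[X]) :
    (spinOp a b N P).coeff 0 = N * a * P.coeff 0 + b * P.coeff 1 := by
  simp [spinOp, firstOrderOp, coeff_derivative]

lemma spinOp_coeff_succ (a b : R) (N : ℕ) (P : R[X]) (m : ℕ) :
    (spinOp a b N P).coeff (m + 1) = a * (N - 2 * (m + 1)) * P.coeff (m + 1)
      + b * (m + 2) * P.coeff (m + 2) + b * (N - m) * P.coeff m := by
  have hX2 : ∀ Q : R[X], X ^ 2 * Q = X * (X * Q) := fun Q => by ring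
  simp only [spinOp, firstOrderOp, sub_mul, add_mul, coeff_add, coeff_sub, mul_assoc, coeff_C_mul,
    ← C_eq_natCast, coeff_X_mul, hX2, coeff_X_mul_derivative, coeff_derivative]
  push_cast
  ring

end Polynomial

namespace Matrix

variable {R : Type*} [Semiring R] {n : ℕ}

def tridiagonal (d e f : ℕ → R) : Matrix (Fin n) (Fin n) R :=
  of fun i j =>
    if i = j then d i else if (j : ℕ) = i + 1 then e i else if (i : ℕ) = j + 1 then f j else 0

lemma tridiagonal_mulVec_apply (d e f v : ℕ → R) (hv : v n = 0) (i : Fin n) :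
    (tridiagonal d e f *ᵥ fun j : Fin n => v j) i
      = d i * v i + e i * v (i + 1) + if (i : ℕ) = 0 then 0 else f (i - 1) * v (i - 1) := by
  have hentry : ∀ t : Fin n, tridiagonal d e f i t * v t
      = (if (t : ℕ) = i then d i * v i else 0) + (if (t : ℕ) = i + 1 then e i * v (i + 1) else 0)
        + if (t : ℕ) + 1 = i then f t * v t else 0 := by
    intro t
    simp only [tridiagonal, of_apply, Fin.ext_iff]
    split_ifs <;> (try simp only [add_zero, zero_add, zero_mul]) <;> first | rfl | omega | congr 2
  rw [mulVec, dotProduct, Finset.sum_congr rfl fun t _ => hentry t,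
    Fin.sum_univ_eq_sum_range (fun t => (if t = i then d i * v i else 0)
      + (if t = i + 1 then e i * v (i + 1) else 0) + if t + 1 = i then f t * v t else 0),
    Finset.sum_add_distrib, Finset.sum_add_distrib, Finset.sum_ite_eq', Finset.sum_ite_eq',
    if_pos (Finset.mem_range.2 i.2)]
  congr 1
  · by_cases hi : (i : ℕ) + 1 < n
    · rw [if_pos (Finset.mem_range.2 hi)]
    · rw [if_neg (by simpa using hi), show (i : ℕ) + 1 = n by omega, hv, mul_zero]
  · rcases hi : (i : ℕ) with _ | m
    · simp
    · rw [Finset.sum_eq_single_of_mem m (Finset.mem_range.2 (by omega))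
        fun t _ ht => if_neg (by omega)]
      simp

lemma isRoot_charpoly_of_mulVec_eq_smul {K ι : Type*} [Field K] [Fintype ι] [DecidableEq ι]
    {M : Matrix ι ι K} {v : ι → K} {μ : K} (hv : v ≠ 0) (h : M *ᵥ v = μ • v) :
    M.charpoly.IsRoot μ := by
  rw [← charpoly_toLin', ← Module.End.hasEigenvalue_iff_isRoot_charpoly]
  exact Module.End.hasEigenvalue_of_hasEigenvector
    ⟨Module.End.mem_eigenspace_iff.2 (by simpa using h), hv⟩

end Matrix

lemma exists_cos_sq_sub_sin_sq_eq_sin (θ : ℝ) :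
    ∃ c s : ℂ, c ^ 2 + s ^ 2 = 1 ∧ c ^ 2 - s ^ 2 = Real.sin θ ∧ 2 * c * s = Real.cos θ := by
  set φ := Real.pi / 4 - θ / 2
  have hφ : 2 * φ = Real.pi / 2 - θ := by ring
  refine ⟨Real.cos φ, Real.sin φ, by exact_mod_cast Real.cos_sq_add_sin_sq φ, ?_, ?_⟩
  · rw [show Real.sin θ = Real.cos (2 * φ) by rw [hφ, Real.cos_pi_div_two_sub], Real.cos_two_mul']
    push_cast
    ring
  · rw [show Real.cos θ = Real.sin (2 * φ) by rw [hφ, Real.sin_pi_div_two_sub], Real.sin_two_mul]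
    push_cast
    ring

lemma C1_eq_tridiagonal (ℓ : ℕ) (θ : ℝ) :
    C1 ℓ θ = tridiagonal
      (fun i => ((Real.sin θ * ((2 * (ℓ : ℝ) + 1 - 2 * i) / 2) : ℝ) : ℂ))
      (fun i => ((Real.cos θ * ((i + 1) / 2) : ℝ) : ℂ))
      (fun j => ((Real.cos θ * ((2 * (ℓ : ℝ) + 1 - j) / 2) : ℝ) : ℂ)) :=
  rfl

lemma C1_mulVec_coeff (ℓ : ℕ) (θ : ℝ) {P : ℂ[X]} (hP : P.natDegree ≤ 2 * ℓ + 1) :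
    C1 ℓ θ *ᵥ (fun j => P.coeff j)
      = fun i : Fin _ => (spinOp (Real.sin θ : ℂ) (Real.cos θ) (2 * ℓ + 1) P).coeff i / 2 := by
  ext ⟨i, hi⟩
  rw [C1_eq_tridiagonal,
    tridiagonal_mulVec_apply _ _ _ _ (coeff_eq_zero_of_natDegree_lt (by omega))]
  rcases i with _ | m
  · rw [if_pos rfl, spinOp_coeff_zero]
    push_cast
    ring
  · rw [if_neg m.succ_ne_zero, spinOp_coeff_succ]
    push_cast
    ring

lemma C1_mulVec_rotatedMonomial {ℓ : ℕ} {θ : ℝ} {c s : ℂ} (h : c ^ 2 + s ^ 2 = 1)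
    (ha : c ^ 2 - s ^ 2 = Real.sin θ) (hb : 2 * c * s = Real.cos θ) {k j : ℕ}
    (hkj : k + j = 2 * ℓ + 1) :
    C1 ℓ θ *ᵥ (fun i : Fin _ => (rotatedMonomial c s k j).coeff i)
      = (((k : ℂ) - j) / 2) • fun i : Fin _ => (rotatedMonomial c s k j).coeff i := by
  rw [C1_mulVec_coeff _ _ (hkj ▸ natDegree_rotatedMonomial_le c s k j), ← ha, ← hb, ← hkj,
    spinOp_rotatedMonomial h]
  ext i
  simp only [coeff_C_mul, Pi.smul_apply, smul_eq_mul]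
  ring

lemma isRoot_charpoly_C1 (ℓ : ℕ) (θ : ℝ) (j : Fin (2 * ℓ + 2)) :
    (C1 ℓ θ).charpoly.IsRoot ((2 * (ℓ : ℂ) + 1 - 2 * (j : ℕ)) / 2) := by
  obtain ⟨c, s, h, ha, hb⟩ := exists_cos_sq_sub_sin_sq_eq_sin θ
  have hj : (j : ℕ) ≤ 2 * ℓ + 1 := by omega
  have hkj : 2 * ℓ + 1 - j + j = 2 * ℓ + 1 := Nat.sub_add_cancel hj
  have hμ : (((2 * ℓ + 1 - j : ℕ) : ℂ) - (j : ℕ)) / 2 = (2 * (ℓ : ℂ) + 1 - 2 * (j : ℕ)) / 2 := by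
    push_cast [Nat.cast_sub hj]
    ring
  rw [← hμ]
  exact Matrix.isRoot_charpoly_of_mulVec_eq_smul
    (coeff_finVec_ne_zero (rotatedMonomial_ne_zero h _ _)
      ((natDegree_rotatedMonomial_le c s _ _).trans_lt (by rw [hkj]; omega)))
    (C1_mulVec_rotatedMonomial h ha hb hkj)

/-- The multiset of eigenvalues of `C₁(ℓ,θ)` is `{±1/2, ±3/2, …, ±(2ℓ+1)/2}`,
independently of `θ`. -/
theorem stmt14 (ℓ : ℕ) (θ : ℝ) :
    (C1 ℓ θ).charpoly.roots =
      Multiset.map (fun j : Fin (2 * ℓ + 2) => ((2 * (ℓ : ℂ) + 1 - 2 * (j : ℕ)) / 2))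
        Finset.univ.val := by
  have hinj : Function.Injective fun j : Fin (2 * ℓ + 2) => (2 * (ℓ : ℂ) + 1 - 2 * (j : ℕ)) / 2 :=
    fun i j hij => Fin.ext (by simpa using hij)
  rw [← Finset.image_val_of_injOn hinj.injOn]
  refine roots_eq_of_natDegree_le_card_of_ne_zero ?_ ?_ (charpoly_monic _).ne_zero
  · simp only [Finset.mem_image, Finset.mem_univ, true_and, forall_exists_index]
    rintro _ j rfl
    exact isRoot_charpoly_C1 ℓ θ j
  · rw [charpoly_natDegree_eq_dim, Finset.card_image_of_injective _ hinj]
    simp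
end
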